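/- arXiv:2102.01965 — 4 statements merged into one kernel-verified Lean document; each statement's English description precedes it below -/
import Mathlib

section
/- Let Λ = {(W_j, Λ_j, v_j)}_{j∈J} be a g-fusion frame for H with upper bound D and let T_j : H → H_j be bounded operators such that {v_j² P_{W_j} Λ_j* T_j}_{j∈J} is a resolution of the identity operator on H. Then for all f ∈ H, (1/D)‖Σ_{j∈J} v_j² P_{W_j} Λ_j* T_j f‖² ≤ Σ_{j∈J} v_j² ‖T_j f‖². -/
/-!
Pairing the resolution of the identity with `f` gives
`‖f‖² = ∑ⱼ vⱼ² ⟪Λⱼ P_{Wⱼ} f, Tⱼ f⟫`. Each term is bounded by AM-GM with weight `D`,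
`vⱼ² ‖Λⱼ P_{Wⱼ} f‖ ‖Tⱼ f‖ ≤ vⱼ² ‖Λⱼ P_{Wⱼ} f‖² / (2D) + (D/2) vⱼ² ‖Tⱼ f‖²`, and the upper frame
bound turns the first halves into at most `‖f‖² / 2`, leaving
`‖f‖² ≤ ‖f‖² / 2 + (D/2) ∑ⱼ vⱼ² ‖Tⱼ f‖²`.
-/

open ContinuousLinearMap

noncomputable def proj {E : Type*} [NormedAddCommGroup E] [InnerProductSpace ℂ E]
    (W : Submodule ℂ E) [CompleteSpace W] : E →L[ℂ] E :=
  W.subtypeL.comp (Submodule.orthogonalProjection W)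

theorem ENNReal.ofReal_le_tsum_ofReal {ι : Type*} {x : ℝ} {b : ι → ℝ} (hb : ∀ j, 0 ≤ b j)
    (h : Summable b → x ≤ ∑' j, b j) : ENNReal.ofReal x ≤ ∑' j, ENNReal.ofReal (b j) := by
  by_cases htop : ∑' j, ENNReal.ofReal (b j) = ⊤
  · exact htop ▸ le_top
  have hsum : Summable b := by
    simpa only [ENNReal.toReal_ofReal (hb _)] using ENNReal.summable_toReal htop
  rw [← ENNReal.ofReal_tsum_of_nonneg hb hsum]
  exact ENNReal.ofReal_le_ofReal (h hsum)

theorem norm_le_mul_tsum_sq_of_hasSum {ι E : Type*} [SeminormedAddCommGroup E] {g : ι → E}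
    {s : E} (hg : HasSum g s) {α β : ι → ℝ} (hgαβ : ∀ j, ‖g j‖ ≤ α j * β j)
    (hα : Summable fun j => α j ^ 2) (hβ : Summable fun j => β j ^ 2) {D : ℝ} (hD : 0 < D)
    (hαD : ∑' j, α j ^ 2 ≤ D * ‖s‖) : ‖s‖ ≤ D * ∑' j, β j ^ 2 := by
  have hamgm : ∀ j, ‖g j‖ ≤ α j ^ 2 / (2 * D) + D / 2 * β j ^ 2 := fun j => by
    refine (hgαβ j).trans ?_
    rw [div_add' _ _ _ (by positivity), le_div_iff₀ (by positivity)]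
    nlinarith [sq_nonneg (α j - D * β j)]
  have hbound := hg.norm_le_of_bounded
    ((hα.hasSum.div_const (2 * D)).add (hβ.hasSum.mul_left (D / 2))) hamgm
  have hαs : (∑' j, α j ^ 2) / (2 * D) ≤ ‖s‖ / 2 := by
    rw [div_le_iff₀ (by positivity)]
    linarith
  linarith

theorem inner_proj_adjoint {E F : Type*} [NormedAddCommGroup E] [InnerProductSpace ℂ E]
    [CompleteSpace E] [NormedAddCommGroup F] [InnerProductSpace ℂ F] [CompleteSpace F]
    (W : Submodule ℂ E) [CompleteSpace W] (Λ : E →L[ℂ] F) (f : E) (g : F) :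
    inner ℂ f (proj W (adjoint Λ g)) = inner ℂ (Λ (proj W f)) g := by
  rw [← adjoint_inner_right]
  exact (Submodule.inner_starProjection_left_eq_right W f _).symm

theorem stmt2_general {ι E : Type*} [NormedAddCommGroup E] [InnerProductSpace ℂ E] [CompleteSpace E]
    {G : ι → Type*} [∀ j, NormedAddCommGroup (G j)] [∀ j, InnerProductSpace ℂ (G j)]
    [∀ j, CompleteSpace (G j)]
    (W : ι → Submodule ℂ E) [∀ j, CompleteSpace (W j)]
    (v : ι → ℝ)
    (Λ : ∀ j, E →L[ℂ] G j)
    (C D : ℝ)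
    (hsum : ∀ f : E, Summable fun j => (v j) ^ 2 * ‖Λ j (proj (W j) f)‖ ^ 2)
    (hframe : ∀ f : E,
      C * ‖f‖ ^ 2 ≤ ∑' j, (v j) ^ 2 * ‖Λ j (proj (W j) f)‖ ^ 2 ∧
      ∑' j, (v j) ^ 2 * ‖Λ j (proj (W j) f)‖ ^ 2 ≤ D * ‖f‖ ^ 2)
    (T : ∀ j, E →L[ℂ] G j)
    (hres : ∀ f : E, HasSum
      (fun j => (v j) ^ 2 • proj (W j) (ContinuousLinearMap.adjoint (Λ j) (T j f))) f) :
    ∀ f : E,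
      ENNReal.ofReal (1 / D *
        ‖∑' j, (v j) ^ 2 • proj (W j) (ContinuousLinearMap.adjoint (Λ j) (T j f))‖ ^ 2) ≤
      ∑' j, ENNReal.ofReal ((v j) ^ 2 * ‖T j f‖ ^ 2) := by
  intro f
  rcases le_or_gt D 0 with hD | hD
  · rw [ENNReal.ofReal_of_nonpos
      (mul_nonpos_of_nonpos_of_nonneg (one_div_nonpos.2 hD) (sq_nonneg _))]
    exact zero_le
  refine ENNReal.ofReal_le_tsum_ofReal (fun j => by positivity) fun hB => ?_
  rw [(hres f).tsum_eq, one_div, inv_mul_le_iff₀ hD]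
  have hterm : ∀ j, ‖innerSL ℂ f ((v j) ^ 2 • proj (W j) (adjoint (Λ j) (T j f)))‖ ≤
      v j * ‖Λ j (proj (W j) f)‖ * (v j * ‖T j f‖) := fun j => by
    rw [innerSL_apply_apply, inner_smul_right_eq_smul, inner_proj_adjoint, norm_smul,
      Real.norm_eq_abs, abs_of_nonneg (sq_nonneg _)]
    nlinarith [norm_inner_le_norm (𝕜 := ℂ) (Λ j (proj (W j) f)) (T j f), sq_nonneg (v j)]
  have hnorm : ‖innerSL ℂ f f‖ = ‖f‖ ^ 2 := by
    simp only [innerSL_apply_apply, inner_self_eq_norm_sq_to_K, norm_pow, RCLike.norm_ofReal,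
      abs_norm]
  have hbound := norm_le_mul_tsum_sq_of_hasSum ((innerSL ℂ f).hasSum (hres f)) hterm
    (by simpa only [mul_pow] using hsum f) (by simpa only [mul_pow] using hB) hD
    (by simpa only [mul_pow, hnorm] using (hframe f).2)
  simpa only [mul_pow, hnorm] using hbound

/-- if {v_j² P_{W_j} Λ_j* T_j} is a resolution of the identity, then
(1/D)‖Σ_j v_j² P_{W_j} Λ_j* T_j f‖² ≤ Σ_j v_j² ‖T_j f‖². -/
theorem stmt2 {ι E : Type*} [NormedAddCommGroup E] [InnerProductSpace ℂ E] [CompleteSpace E]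
    {G : ι → Type*} [∀ j, NormedAddCommGroup (G j)] [∀ j, InnerProductSpace ℂ (G j)]
    [∀ j, CompleteSpace (G j)]
    (W : ι → Submodule ℂ E) [∀ j, CompleteSpace (W j)]
    (v : ι → ℝ) (hv : ∀ j, 0 < v j)
    (Λ : ∀ j, E →L[ℂ] G j)
    (C D : ℝ) (hC : 0 < C) (hCD : C ≤ D)
    (hsum : ∀ f : E, Summable fun j => (v j) ^ 2 * ‖Λ j (proj (W j) f)‖ ^ 2)
    (hframe : ∀ f : E,
      C * ‖f‖ ^ 2 ≤ ∑' j, (v j) ^ 2 * ‖Λ j (proj (W j) f)‖ ^ 2 ∧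
      ∑' j, (v j) ^ 2 * ‖Λ j (proj (W j) f)‖ ^ 2 ≤ D * ‖f‖ ^ 2)
    (T : ∀ j, E →L[ℂ] G j)
    (hres : ∀ f : E, HasSum
      (fun j => (v j) ^ 2 • proj (W j) (ContinuousLinearMap.adjoint (Λ j) (T j f))) f) :
    ∀ f : E,
      ENNReal.ofReal (1 / D *
        ‖∑' j, (v j) ^ 2 • proj (W j) (ContinuousLinearMap.adjoint (Λ j) (T j f))‖ ^ 2) ≤
      ∑' j, ENNReal.ofReal ((v j) ^ 2 * ‖T j f‖ ^ 2) :=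
  stmt2_general W v Λ C D hsum hframe T hres
end

section
/- Let Λ = {(W_j, Λ_j, v_j)}_{j∈J} be a g-fusion frame for H with bounds C, D, and T_j : H → H_j bounded operators with E = sup_j ‖T_j‖² < ∞ such that {v_j² P_{W_j} Λ_j* T_j}_{j∈J} is a resolution of the identity on H and T_j* Λ_j P_{W_j} = T_j for all j. Then (1/D)‖f‖² ≤ Σ_{j∈J} v_j² ‖T_j f‖² ≤ D·E·‖f‖² for all f ∈ H. -/
/-!
The resolution of the identity gives `‖f‖² = Σ v_j² Re ⟪Λ_j P_j f, T_j f⟫`. Bounding each term by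
`‖x - D y‖² ≥ 0` and using the upper frame bound `D` yields `‖f‖² ≤ D Σ v_j² ‖T_j f‖²`. The
identity `T_j = T_j* Λ_j P_j` gives `‖T_j f‖ ≤ ‖T_j‖ ‖Λ_j P_j f‖`, hence the upper bound.
-/

open ContinuousLinearMap

open scoped InnerProductSpace

section

variable {𝕜 E : Type*} [RCLike 𝕜] [NormedAddCommGroup E] [InnerProductSpace 𝕜 E]

theorem two_mul_mul_re_inner_le (D : ℝ) (x y : E) :
    2 * D * RCLike.re ⟪x, y⟫_𝕜 ≤ ‖x‖ ^ 2 + D ^ 2 * ‖y‖ ^ 2 := by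
  have h := norm_sub_sq (𝕜 := 𝕜) x ((D : 𝕜) • y)
  rw [inner_smul_right, RCLike.re_ofReal_mul, norm_smul, RCLike.norm_ofReal, mul_pow,
    sq_abs] at h
  nlinarith [sq_nonneg ‖x - (D : 𝕜) • y‖]

theorem le_mul_tsum_of_hasSum_re_inner {ι : Type*} {c : ι → ℝ} (hc : ∀ j, 0 ≤ c j)
    {x y : ι → E} {s D : ℝ} (hD : 0 < D)
    (hs : HasSum (fun j => c j * RCLike.re ⟪x j, y j⟫_𝕜) s)
    (hx : Summable fun j => c j * ‖x j‖ ^ 2) (hy : Summable fun j => c j * ‖y j‖ ^ 2)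
    (hxs : ∑' j, c j * ‖x j‖ ^ 2 ≤ D * s) :
    s ≤ D * ∑' j, c j * ‖y j‖ ^ 2 := by
  have key : 2 * D * s ≤ ∑' j, c j * ‖x j‖ ^ 2 + D ^ 2 * ∑' j, c j * ‖y j‖ ^ 2 := by
    refine hasSum_le (fun j => ?_) (hs.mul_left (2 * D)) (hx.hasSum.add (hy.hasSum.mul_left _))
    nlinarith [mul_le_mul_of_nonneg_left (two_mul_mul_re_inner_le (𝕜 := 𝕜) D (x j) (y j)) (hc j)]
  nlinarith

variable [CompleteSpace E]

theorem hasSum_re_inner_of_hasSum_adjoint {ι : Type*} {c : ι → ℝ} {A B : ι → E →L[𝕜] E}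
    {f : E} (h : HasSum (fun j => (c j : 𝕜) • adjoint (A j) (B j f)) f) :
    HasSum (fun j => c j * RCLike.re ⟪A j f, B j f⟫_𝕜) (‖f‖ ^ 2) := by
  have := RCLike.hasSum_re 𝕜 (h.mapL (innerSL 𝕜 f))
  simpa only [innerSL_apply_apply, inner_smul_right,
    adjoint_inner_right, RCLike.re_ofReal_mul, inner_self_eq_norm_sq] using this

theorem norm_apply_le_of_adjoint_comp_eq {T S : E →L[𝕜] E} (h : adjoint T ∘L S = T) (f : E) :
    ‖T f‖ ≤ ‖T‖ * ‖S f‖ := by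
  have := (adjoint T).le_opNorm (S f)
  rwa [LinearIsometryEquiv.norm_map, ← comp_apply, h] at this

end

theorem adjoint_proj {E : Type*} [NormedAddCommGroup E] [InnerProductSpace ℂ E] [CompleteSpace E]
    (W : Submodule ℂ E) [CompleteSpace W] : adjoint (proj W) = proj W :=
  isSelfAdjoint_starProjection W

theorem stmt3_general {ι E : Type*} [NormedAddCommGroup E] [InnerProductSpace ℂ E] [CompleteSpace E]
    (W : ι → Submodule ℂ E) [∀ j, CompleteSpace (W j)]
    (v : ι → ℝ)
    (Λ : ι → E →L[ℂ] E)
    (C D : ℝ)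
    (hsum : ∀ f : E, Summable fun j => (v j) ^ 2 * ‖Λ j (proj (W j) f)‖ ^ 2)
    (hframe : ∀ f : E,
      C * ‖f‖ ^ 2 ≤ ∑' j, (v j) ^ 2 * ‖Λ j (proj (W j) f)‖ ^ 2 ∧
      ∑' j, (v j) ^ 2 * ‖Λ j (proj (W j) f)‖ ^ 2 ≤ D * ‖f‖ ^ 2)
    (T : ι → E →L[ℂ] E)
    (Ebd : ℝ) (hEbd : ∀ j, ‖T j‖ ^ 2 ≤ Ebd)
    (hres : ∀ f : E, HasSum
      (fun j => (v j) ^ 2 • proj (W j) (ContinuousLinearMap.adjoint (Λ j) (T j f))) f)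
    (hT : ∀ j, (ContinuousLinearMap.adjoint (T j)).comp ((Λ j).comp (proj (W j))) = T j) :
    ∀ f : E,
      Summable (fun j => (v j) ^ 2 * ‖T j f‖ ^ 2) ∧
      1 / D * ‖f‖ ^ 2 ≤ ∑' j, (v j) ^ 2 * ‖T j f‖ ^ 2 ∧
      ∑' j, (v j) ^ 2 * ‖T j f‖ ^ 2 ≤ D * Ebd * ‖f‖ ^ 2 := by
  intro f
  have hterm (j : ι) : v j ^ 2 * ‖T j f‖ ^ 2 ≤ Ebd * (v j ^ 2 * ‖Λ j (proj (W j) f)‖ ^ 2) := by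
    have h := pow_le_pow_left₀ (norm_nonneg _) (norm_apply_le_of_adjoint_comp_eq (hT j) f) 2
    rw [mul_pow, comp_apply] at h
    nlinarith [mul_le_mul_of_nonneg_right (hEbd j) (sq_nonneg ‖Λ j (proj (W j) f)‖),
      sq_nonneg (v j)]
  have hsumT : Summable fun j => v j ^ 2 * ‖T j f‖ ^ 2 :=
    .of_nonneg_of_le (fun j => by positivity) hterm ((hsum f).mul_left Ebd)
  refine ⟨hsumT, ?_, ?_⟩
  · rcases le_or_gt D 0 with hD | hD
    · exact (mul_nonpos_of_nonpos_of_nonneg (by simpa using hD) (sq_nonneg _)).trans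
        (tsum_nonneg fun j => by positivity)
    have hres' : HasSum (fun j => ((v j ^ 2 : ℝ) : ℂ) • adjoint (Λ j ∘L proj (W j)) (T j f)) f := by
      simpa only [Complex.coe_smul, adjoint_comp, adjoint_proj, comp_apply] using hres f
    rw [one_div_mul_eq_div, div_le_iff₀' hD]
    exact le_mul_tsum_of_hasSum_re_inner (fun j => sq_nonneg _) hD
      (hasSum_re_inner_of_hasSum_adjoint hres') (hsum f) hsumT (hframe f).2
  · rcases isEmpty_or_nonempty ι with _ | ⟨⟨j⟩⟩
    · simp [(hres f).unique hasSum_empty]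
    calc ∑' j, v j ^ 2 * ‖T j f‖ ^ 2
        ≤ Ebd * ∑' j, v j ^ 2 * ‖Λ j (proj (W j) f)‖ ^ 2 := by
          rw [← tsum_mul_left]; exact hsumT.tsum_le_tsum hterm ((hsum f).mul_left Ebd)
      _ ≤ Ebd * (D * ‖f‖ ^ 2) :=
          mul_le_mul_of_nonneg_left (hframe f).2 ((sq_nonneg _).trans (hEbd j))
      _ = D * Ebd * ‖f‖ ^ 2 := by ring

/-- with E = sup_j ‖T_j‖², resolution of identity and T_j* Λ_j P_{W_j} = T_j,
one gets (1/D)‖f‖² ≤ Σ_j v_j² ‖T_j f‖² ≤ D·E·‖f‖². (Here all operators act on H, as the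
hypothesis T_j* Λ_j P_{W_j} = T_j forces H_j = H.) -/
theorem stmt3 {ι E : Type*} [NormedAddCommGroup E] [InnerProductSpace ℂ E] [CompleteSpace E]
    (W : ι → Submodule ℂ E) [∀ j, CompleteSpace (W j)]
    (v : ι → ℝ) (hv : ∀ j, 0 < v j)
    (Λ : ι → E →L[ℂ] E)
    (C D : ℝ) (hC : 0 < C) (hCD : C ≤ D)
    (hsum : ∀ f : E, Summable fun j => (v j) ^ 2 * ‖Λ j (proj (W j) f)‖ ^ 2)
    (hframe : ∀ f : E,
      C * ‖f‖ ^ 2 ≤ ∑' j, (v j) ^ 2 * ‖Λ j (proj (W j) f)‖ ^ 2 ∧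
      ∑' j, (v j) ^ 2 * ‖Λ j (proj (W j) f)‖ ^ 2 ≤ D * ‖f‖ ^ 2)
    (T : ι → E →L[ℂ] E)
    (Ebd : ℝ) (hEbd : ∀ j, ‖T j‖ ^ 2 ≤ Ebd)
    (hres : ∀ f : E, HasSum
      (fun j => (v j) ^ 2 • proj (W j) (ContinuousLinearMap.adjoint (Λ j) (T j f))) f)
    (hT : ∀ j, (ContinuousLinearMap.adjoint (T j)).comp ((Λ j).comp (proj (W j))) = T j) :
    ∀ f : E,
      Summable (fun j => (v j) ^ 2 * ‖T j f‖ ^ 2) ∧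
      1 / D * ‖f‖ ^ 2 ≤ ∑' j, (v j) ^ 2 * ‖T j f‖ ^ 2 ∧
      ∑' j, (v j) ^ 2 * ‖T j f‖ ^ 2 ≤ D * Ebd * ‖f‖ ^ 2 :=
  stmt3_general W v Λ C D hsum hframe T Ebd hEbd hres hT
end

section
/- Let K ∈ B(H). A family Λ = {(W_j, Λ_j, v_j)}_{j∈J} is a g-atomic subspace of H with respect to K if and only if Λ is a K-g-fusion frame for H. -/
/-!
The Bessel bound makes `U f = (v j • Λ j (P_{W j} f))_j` a bounded operator `H → ℓ²({H_j})`
whose adjoint is the synthesis map `g ↦ ∑ v j • P_{W j} (Λ j* g j)`. So the atomic condition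
says `K x = U* g` with `‖g‖ ≤ C ‖x‖`, and the lower frame bound says `‖K* f‖ ≤ c ‖U f‖`.
These are the two sides of Douglas' factorization: from `K x = U* g` with `x = K* f` one gets
`‖K* f‖² = ⟪U f, g⟫ ≤ C ‖U f‖ ‖K* f‖`; conversely the bound defines `V` with `V ∘ U = K*`
(as `K* ∘ U⁻¹` on the range of `U`, extended to its closure and by zero on the orthogonal
complement), and then `K = U* ∘ V*`.
-/

open ContinuousLinearMap

theorem exists_le_mul_iff_exists_mul_sq_le {α : Type*} {a b : α → ℝ} (ha : ∀ x, 0 ≤ a x)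
    (hb : ∀ x, 0 ≤ b x) :
    (∃ c > 0, ∀ x, a x ≤ c * b x) ↔ ∃ A > 0, ∀ x, A * a x ^ 2 ≤ b x ^ 2 := by
  constructor
  · rintro ⟨c, hc, h⟩
    refine ⟨(c ^ 2)⁻¹, by positivity, fun x ↦ ?_⟩
    rw [inv_mul_le_iff₀ (by positivity), ← mul_pow]
    exact pow_le_pow_left₀ (ha x) (h x) 2
  · rintro ⟨A, hA, h⟩
    refine ⟨(√A)⁻¹, by positivity, fun x ↦ ?_⟩
    rw [le_inv_mul_iff₀ (by positivity)]
    calc √A * a x = √(A * a x ^ 2) := by rw [Real.sqrt_mul hA.le, Real.sqrt_sq (ha x)]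
      _ ≤ √(b x ^ 2) := Real.sqrt_le_sqrt (h x)
      _ = b x := Real.sqrt_sq (hb x)

theorem lp.hasSum_norm_sq {ι : Type*} {G : ι → Type*} [∀ j, NormedAddCommGroup (G j)]
    (u : lp G 2) : HasSum (fun j ↦ ‖u j‖ ^ 2) (‖u‖ ^ 2) := by
  simpa only [ENNReal.toReal_ofNat, Real.rpow_two] using lp.hasSum_norm (by norm_num) u

theorem memℓp_two_of_summable_sq {ι : Type*} {G : ι → Type*} [∀ j, NormedAddCommGroup (G j)]
    {u : ∀ j, G j} (hu : Summable fun j ↦ ‖u j‖ ^ 2) : Memℓp u 2 :=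
  memℓp_gen (by simpa only [ENNReal.toReal_ofNat, Real.rpow_two] using hu)

namespace ContinuousLinearMap

theorem exists_comp_eq_of_norm_le {𝕜 E F H : Type*} [RCLike 𝕜]
    [NormedAddCommGroup E] [NormedSpace 𝕜 E]
    [NormedAddCommGroup F] [InnerProductSpace 𝕜 F] [CompleteSpace F]
    [NormedAddCommGroup H] [NormedSpace 𝕜 H] [CompleteSpace H]
    (U : E →L[𝕜] F) (S : E →L[𝕜] H) (c : ℝ) (h : ∀ x, ‖S x‖ ≤ c * ‖U x‖) :
    ∃ V : F →L[𝕜] H, V ∘L U = S := by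
  set R := LinearMap.range U.toLinearMap
  set M := R.topologicalClosure
  have : CompleteSpace M := R.isClosed_topologicalClosure.completeSpace_coe
  let e : E →ₗ[𝕜] M :=
    LinearMap.codRestrict M U fun x ↦ R.le_topologicalClosure (LinearMap.mem_range_self _ x)
  have he : DenseRange e := by
    rw [DenseRange, Subtype.dense_iff, ← Set.range_comp]
    exact subset_rfl
  refine ⟨(S.toLinearMap.extendOfNorm e).comp M.orthogonalProjectionOnto, ext fun x ↦ ?_⟩
  have hx : M.orthogonalProjectionOnto (U x) = e x :=
    M.orthogonalProjectionOnto_mem_subspace_eq_self (e x)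
  simp only [comp_apply, hx, LinearMap.extendOfNorm_eq he ⟨c, h⟩, coe_coe]

variable {𝕜 E F H : Type*} [RCLike 𝕜]
  [NormedAddCommGroup E] [InnerProductSpace 𝕜 E] [CompleteSpace E]
  [NormedAddCommGroup F] [InnerProductSpace 𝕜 F] [CompleteSpace F]
  [NormedAddCommGroup H] [InnerProductSpace 𝕜 H] [CompleteSpace H]

theorem norm_adjoint_apply_le_of_forall_exists_eq_adjoint {U : E →L[𝕜] F} {K : H →L[𝕜] E}
    {C : ℝ} (hC : 0 ≤ C) (hK : ∀ x, ∃ g, K x = adjoint U g ∧ ‖g‖ ≤ C * ‖x‖) (f : E) :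
    ‖adjoint K f‖ ≤ C * ‖U f‖ := by
  obtain ⟨g, hKg, hg⟩ := hK (adjoint K f)
  have key : ‖adjoint K f‖ ^ 2 ≤ ‖U f‖ * (C * ‖adjoint K f‖) :=
    calc ‖adjoint K f‖ ^ 2 = RCLike.re (inner 𝕜 (U f) g) := by
          rw [← inner_self_eq_norm_sq (𝕜 := 𝕜), adjoint_inner_left, hKg, adjoint_inner_right]
      _ ≤ ‖U f‖ * ‖g‖ := (RCLike.re_le_norm _).trans (norm_inner_le_norm _ _)
      _ ≤ ‖U f‖ * (C * ‖adjoint K f‖) := by gcongr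
  rcases (norm_nonneg (adjoint K f)).eq_or_lt with h0 | h0
  · rw [← h0]
    positivity
  · nlinarith

theorem exists_eq_adjoint_iff_norm_adjoint_le (U : E →L[𝕜] F) (K : E →L[𝕜] E) :
    (∃ C > 0, ∀ x, ∃ g, K x = adjoint U g ∧ ‖g‖ ≤ C * ‖x‖) ↔
      ∃ c > 0, ∀ f, ‖adjoint K f‖ ≤ c * ‖U f‖ := by
  constructor
  · rintro ⟨C, hC, hK⟩
    exact ⟨C, hC, norm_adjoint_apply_le_of_forall_exists_eq_adjoint hC.le hK⟩
  · rintro ⟨c, -, hK⟩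
    obtain ⟨V, hV⟩ := exists_comp_eq_of_norm_le U (adjoint K) c hK
    have hK : K = adjoint U ∘L adjoint V := by rw [← adjoint_comp, hV, adjoint_adjoint]
    refine ⟨‖adjoint V‖ + 1, by positivity, fun x ↦ ⟨adjoint V x, by rw [hK]; rfl, ?_⟩⟩
    calc ‖adjoint V x‖ ≤ ‖adjoint V‖ * ‖x‖ := le_opNorm _ _
      _ ≤ (‖adjoint V‖ + 1) * ‖x‖ := by gcongr; linarith

end ContinuousLinearMap

section BesselFamily

variable {𝕜 ι E : Type*} [RCLike 𝕜] [NormedAddCommGroup E] [InnerProductSpace 𝕜 E]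
  {G : ι → Type*} [∀ j, NormedAddCommGroup (G j)] [∀ j, InnerProductSpace 𝕜 (G j)]

def IsBesselFamily (T : ∀ j, E →L[𝕜] G j) (B : ℝ) : Prop :=
  ∀ f, Summable (fun j ↦ ‖T j f‖ ^ 2) ∧ ∑' j, ‖T j f‖ ^ 2 ≤ B * ‖f‖ ^ 2

namespace IsBesselFamily

variable {T : ∀ j, E →L[𝕜] G j} {B : ℝ} (hT : IsBesselFamily T B)

noncomputable def analysisOp : E →L[𝕜] lp G 2 :=
  LinearMap.mkContinuous
    { toFun f := ⟨fun j ↦ T j f, memℓp_two_of_summable_sq (hT f).1⟩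
      map_add' f f' := by ext j; exact map_add (T j) f f'
      map_smul' c f := by ext j; exact map_smul (T j) c f }
    (√B) fun f ↦ by
      rw [← Real.sqrt_sq (norm_nonneg _), ← Real.sqrt_sq (norm_nonneg f),
        ← Real.sqrt_mul' _ (sq_nonneg _)]
      gcongr
      rw [(lp.hasSum_norm_sq _).tsum_eq.symm]
      exact (hT f).2

@[simp]
theorem analysisOp_apply (f : E) (j : ι) : hT.analysisOp f j = T j f := rfl

theorem norm_analysisOp_sq (f : E) : ‖hT.analysisOp f‖ ^ 2 = ∑' j, ‖T j f‖ ^ 2 :=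
  (lp.hasSum_norm_sq _).tsum_eq.symm

variable [CompleteSpace E] [∀ j, CompleteSpace (G j)]

theorem hasSum_adjoint_analysisOp (g : lp G 2) :
    HasSum (fun j ↦ adjoint (T j) (g j)) (adjoint hT.analysisOp g) := by
  classical
  have hsingle (j : ι) : adjoint (T j) (g j) = adjoint hT.analysisOp (lp.single 2 j (g j)) :=
    ext_inner_left 𝕜 fun f ↦ by
      rw [adjoint_inner_right, adjoint_inner_right, lp.inner_single_right, analysisOp_apply]
  simpa only [hsingle] using (lp.hasSum_single ENNReal.ofNat_ne_top g).mapL (adjoint hT.analysisOp)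

theorem exists_synthesis_iff (hT : IsBesselFamily T B) (K : E →L[𝕜] E) :
    (∃ C > 0, ∀ f, ∃ g : lp G 2, HasSum (fun j ↦ adjoint (T j) (g j)) (K f) ∧ ‖g‖ ≤ C * ‖f‖) ↔
      ∃ A > 0, ∀ f, A * ‖adjoint K f‖ ^ 2 ≤ ∑' j, ‖T j f‖ ^ 2 := by
  have hsynth (f : E) (g : lp G 2) :
      HasSum (fun j ↦ adjoint (T j) (g j)) (K f) ↔ K f = adjoint hT.analysisOp g :=
    ⟨fun h ↦ h.unique (hT.hasSum_adjoint_analysisOp g),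
      fun h ↦ h ▸ hT.hasSum_adjoint_analysisOp g⟩
  simp only [hsynth, ← hT.norm_analysisOp_sq]
  rw [ContinuousLinearMap.exists_eq_adjoint_iff_norm_adjoint_le,
    exists_le_mul_iff_exists_mul_sq_le (fun _ ↦ norm_nonneg _) (fun _ ↦ norm_nonneg _)]

end IsBesselFamily

theorem isBesselFamily_and_synthesis_iff [CompleteSpace E] [∀ j, CompleteSpace (G j)]
    (T : ∀ j, E →L[𝕜] G j) (K : E →L[𝕜] E) :
    ((∃ B > 0, IsBesselFamily T B) ∧
        ∃ C > 0, ∀ f, ∃ g : lp G 2, HasSum (fun j ↦ adjoint (T j) (g j)) (K f) ∧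
          ‖g‖ ≤ C * ‖f‖) ↔
      ∃ A > 0, ∃ B > 0, ∀ f, Summable (fun j ↦ ‖T j f‖ ^ 2) ∧
        A * ‖adjoint K f‖ ^ 2 ≤ ∑' j, ‖T j f‖ ^ 2 ∧ ∑' j, ‖T j f‖ ^ 2 ≤ B * ‖f‖ ^ 2 := by
  constructor
  · rintro ⟨⟨B, hB, hT⟩, hsynth⟩
    obtain ⟨A, hA, hlower⟩ := (hT.exists_synthesis_iff K).1 hsynth
    exact ⟨A, hA, B, hB, fun f ↦ ⟨(hT f).1, hlower f, (hT f).2⟩⟩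
  · rintro ⟨A, hA, B, hB, hframe⟩
    have hT : IsBesselFamily T B := fun f ↦ ⟨(hframe f).1, (hframe f).2.2⟩
    exact ⟨⟨B, hB, hT⟩, (hT.exists_synthesis_iff K).2 ⟨A, hA, fun f ↦ (hframe f).2.1⟩⟩

end BesselFamily

section Fusion

variable {ι E : Type*} [NormedAddCommGroup E] [InnerProductSpace ℂ E]
  {G : ι → Type*} [∀ j, NormedAddCommGroup (G j)] [∀ j, InnerProductSpace ℂ (G j)]
  (W : ι → Submodule ℂ E) [∀ j, CompleteSpace (W j)] (v : ι → ℝ) (Λ : ∀ j, E →L[ℂ] G j)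

noncomputable def fusionFamily (j : ι) : E →L[ℂ] G j := (v j : ℂ) • (Λ j ∘L proj (W j))

theorem norm_fusionFamily_apply_sq (j : ι) (f : E) :
    ‖fusionFamily W v Λ j f‖ ^ 2 = v j ^ 2 * ‖Λ j (proj (W j) f)‖ ^ 2 := by
  simp [fusionFamily, norm_smul, mul_pow]

theorem adjoint_fusionFamily_apply [CompleteSpace E] [∀ j, CompleteSpace (G j)] (j : ι) (x : G j) :
    adjoint (fusionFamily W v Λ j) x = v j • proj (W j) (adjoint (Λ j) x) := by
  have hproj : adjoint (proj (W j)) = proj (W j) := (isSelfAdjoint_starProjection (W j)).adjoint_eq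
  rw [fusionFamily, map_smulₛₗ adjoint, adjoint_comp, hproj]
  simp [Complex.coe_smul]

end Fusion

theorem stmt5_general {ι E : Type*} [NormedAddCommGroup E] [InnerProductSpace ℂ E] [CompleteSpace E]
    {G : ι → Type*} [∀ j, NormedAddCommGroup (G j)] [∀ j, InnerProductSpace ℂ (G j)]
    [∀ j, CompleteSpace (G j)]
    (W : ι → Submodule ℂ E) [∀ j, CompleteSpace (W j)]
    (v : ι → ℝ)
    (Λ : ∀ j, E →L[ℂ] G j) (K : E →L[ℂ] E) :
    ((∃ B > (0 : ℝ), ∀ f : E,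
        Summable (fun j => (v j) ^ 2 * ‖Λ j (proj (W j) f)‖ ^ 2) ∧
        ∑' j, (v j) ^ 2 * ‖Λ j (proj (W j) f)‖ ^ 2 ≤ B * ‖f‖ ^ 2) ∧
      ∃ C > (0 : ℝ), ∀ f : E, ∃ g : lp G 2,
        HasSum (fun j => v j • proj (W j)
          (ContinuousLinearMap.adjoint (Λ j) ((g : ∀ j, G j) j))) (K f) ∧
        ‖g‖ ≤ C * ‖f‖) ↔
    (∃ A > (0 : ℝ), ∃ B > (0 : ℝ), ∀ f : E,
      Summable (fun j => (v j) ^ 2 * ‖Λ j (proj (W j) f)‖ ^ 2) ∧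
      A * ‖ContinuousLinearMap.adjoint K f‖ ^ 2 ≤
        ∑' j, (v j) ^ 2 * ‖Λ j (proj (W j) f)‖ ^ 2 ∧
      ∑' j, (v j) ^ 2 * ‖Λ j (proj (W j) f)‖ ^ 2 ≤ B * ‖f‖ ^ 2) := by
  simpa only [IsBesselFamily, norm_fusionFamily_apply_sq, adjoint_fusionFamily_apply] using
    isBesselFamily_and_synthesis_iff (fusionFamily W v Λ) K

/-- Λ is a g-atomic subspace of H with respect to K iff Λ is a
K-g-fusion frame for H. -/
theorem stmt5 {ι E : Type*} [NormedAddCommGroup E] [InnerProductSpace ℂ E] [CompleteSpace E]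
    {G : ι → Type*} [∀ j, NormedAddCommGroup (G j)] [∀ j, InnerProductSpace ℂ (G j)]
    [∀ j, CompleteSpace (G j)]
    (W : ι → Submodule ℂ E) [∀ j, CompleteSpace (W j)]
    (v : ι → ℝ) (hv : ∀ j, 0 < v j)
    (Λ : ∀ j, E →L[ℂ] G j) (K : E →L[ℂ] E) :
    ((∃ B > (0 : ℝ), ∀ f : E,
        Summable (fun j => (v j) ^ 2 * ‖Λ j (proj (W j) f)‖ ^ 2) ∧
        ∑' j, (v j) ^ 2 * ‖Λ j (proj (W j) f)‖ ^ 2 ≤ B * ‖f‖ ^ 2) ∧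
      ∃ C > (0 : ℝ), ∀ f : E, ∃ g : lp G 2,
        HasSum (fun j => v j • proj (W j)
          (ContinuousLinearMap.adjoint (Λ j) ((g : ∀ j, G j) j))) (K f) ∧
        ‖g‖ ≤ C * ‖f‖) ↔
    (∃ A > (0 : ℝ), ∃ B > (0 : ℝ), ∀ f : E,
      Summable (fun j => (v j) ^ 2 * ‖Λ j (proj (W j) f)‖ ^ 2) ∧
      A * ‖ContinuousLinearMap.adjoint K f‖ ^ 2 ≤
        ∑' j, (v j) ^ 2 * ‖Λ j (proj (W j) f)‖ ^ 2 ∧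
      ∑' j, (v j) ^ 2 * ‖Λ j (proj (W j) f)‖ ^ 2 ≤ B * ‖f‖ ^ 2) :=
  stmt5_general W v Λ K
end

section
/- Let Λ, Γ be g-fusion Bessel sequences in H with bounds D₁, D₂ and frame operator S_{ΓΛ}. If there exists λ ∈ [0,1) with ‖f − S_{ΓΛ} f‖ ≤ λ‖f‖ for all f ∈ H, then both Λ and Γ are g-fusion frames for H; in particular Γ has lower bound (1−λ)²/D₁ and upper bound D₂. -/
/-!
Write `T_Λ f = ∑ w_j² ‖Λ_j P_{W_j} f‖²` and `T_Γ g = ∑ v_j² ‖Γ_j P_{V_j} g‖²`. Termwise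
Cauchy–Schwarz gives `|⟪g, S f⟫| ≤ √(T_Γ g) √(T_Λ f)`. Taking `g = S f` and the Bessel bound of `Γ`
yields `‖S f‖ ≤ √D₂ √(T_Λ f)`; dually, taking `f = S* g` and the Bessel bound of `Λ` yields
`‖S* g‖ ≤ √D₁ √(T_Γ g)`. Since `‖1 - S‖ = ‖1 - S*‖ ≤ λ`, both `S` and `S*` are bounded below by
`1 - λ`, which gives the lower frame bounds.
-/

open ContinuousLinearMap

open scoped InnerProductSpace

section CauchySchwarz

variable {ι F : Type*} [SeminormedAddCommGroup F]

theorem summable_mul_and_tsum_mul_le_sqrt_mul_sqrt {a b : ι → ℝ} (ha : ∀ i, 0 ≤ a i)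
    (hb : ∀ i, 0 ≤ b i) (hsa : Summable fun i => a i ^ 2) (hsb : Summable fun i => b i ^ 2) :
    (Summable fun i => a i * b i) ∧
      ∑' i, a i * b i ≤ √(∑' i, a i ^ 2) * √(∑' i, b i ^ 2) := by
  simp_rw [← Real.rpow_two] at hsa hsb
  simpa only [Real.rpow_two, Real.sqrt_eq_rpow] using
    Real.summable_and_inner_le_Lp_mul_Lq_tsum_of_nonneg .two_two ha hb hsa hsb

theorem HasSum.norm_le_sqrt_mul_sqrt {z : ι → F} {s : F} {a b : ι → ℝ} (hz : HasSum z s)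
    (hzab : ∀ i, ‖z i‖ ≤ a i * b i) (ha : ∀ i, 0 ≤ a i) (hb : ∀ i, 0 ≤ b i)
    (hsa : Summable fun i => a i ^ 2) (hsb : Summable fun i => b i ^ 2) :
    ‖s‖ ≤ √(∑' i, a i ^ 2) * √(∑' i, b i ^ 2) :=
  have ⟨hab, hle⟩ := summable_mul_and_tsum_mul_le_sqrt_mul_sqrt ha hb hsa hsb
  (hz.norm_le_of_bounded hab.hasSum hzab).trans hle

end CauchySchwarz

section BoundedBelow

variable {𝕜 E : Type*} [RCLike 𝕜] [NormedAddCommGroup E] [InnerProductSpace 𝕜 E]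

theorem one_sub_mul_norm_le_norm_of_norm_sub_le {x y : E} {c : ℝ} (h : ‖x - y‖ ≤ c * ‖x‖) :
    (1 - c) * ‖x‖ ≤ ‖y‖ := by
  linarith [norm_sub_norm_le x y]

theorem norm_sub_adjoint_apply_le [CompleteSpace E] {S : E →L[𝕜] E} {c : ℝ} (hc : 0 ≤ c)
    (h : ∀ f, ‖f - S f‖ ≤ c * ‖f‖) (g : E) : ‖g - adjoint S g‖ ≤ c * ‖g‖ := by
  have hnorm : ‖1 - S‖ ≤ c := opNorm_le_bound _ hc fun f => by simpa using h f
  calc ‖g - adjoint S g‖ = ‖adjoint (1 - S) g‖ := by simp [← star_eq_adjoint]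
    _ ≤ ‖adjoint (1 - S)‖ * ‖g‖ := le_opNorm _ g
    _ = ‖1 - S‖ * ‖g‖ := by rw [LinearIsometryEquiv.norm_map]
    _ ≤ c * ‖g‖ := by gcongr

theorem norm_apply_le_sqrt_mul_sqrt {S : E → E} {T₁ T₂ : E → ℝ} {D : ℝ}
    (hS : ∀ f g, ‖⟪g, S f⟫_𝕜‖ ≤ √(T₂ g) * √(T₁ f)) (hT₂ : ∀ g, T₂ g ≤ D * ‖g‖ ^ 2) (f : E) :
    ‖S f‖ ≤ √D * √(T₁ f) := by
  have hsq : ‖S f‖ ^ 2 ≤ ‖S f‖ * (√D * √(T₁ f)) :=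
    calc ‖S f‖ ^ 2 = ‖⟪S f, S f⟫_𝕜‖ := by rw [inner_self_eq_norm_sq_to_K, norm_pow,
          RCLike.norm_ofReal, abs_norm]
      _ ≤ √(T₂ (S f)) * √(T₁ f) := hS f (S f)
      _ ≤ √(D * ‖S f‖ ^ 2) * √(T₁ f) := by gcongr; exact hT₂ _
      _ = ‖S f‖ * (√D * √(T₁ f)) := by
        rw [Real.sqrt_mul' _ (by positivity), Real.sqrt_sq (norm_nonneg _)]; ring
  have hbound : 0 ≤ √D * √(T₁ f) := by positivity
  generalize √D * √(T₁ f) = b at hsq hbound ⊢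
  nlinarith

theorem norm_adjoint_apply_le_sqrt_mul_sqrt [CompleteSpace E] {S : E →L[𝕜] E} {T₁ T₂ : E → ℝ}
    {D : ℝ} (hS : ∀ f g, ‖⟪g, S f⟫_𝕜‖ ≤ √(T₂ g) * √(T₁ f)) (hT₁ : ∀ f, T₁ f ≤ D * ‖f‖ ^ 2)
    (g : E) : ‖adjoint S g‖ ≤ √D * √(T₂ g) :=
  norm_apply_le_sqrt_mul_sqrt (fun g f => by
    rw [adjoint_inner_right, norm_inner_symm, mul_comm]; exact hS f g) hT₁ g

theorem sq_div_le_of_le_sqrt_mul_sqrt {c D D' T : ℝ} (hc : 0 ≤ c) (hT : 0 ≤ T) (hD : D ≤ D')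
    (h : c ≤ √D * √T) : c ^ 2 / D' ≤ T := by
  rcases le_or_gt D' 0 with hD' | hD'
  · exact (div_nonpos_of_nonneg_of_nonpos (sq_nonneg c) hD').trans hT
  rw [div_le_iff₀ hD']
  calc c ^ 2 ≤ (√D * √T) ^ 2 := pow_le_pow_left₀ hc h 2
    _ = T * max D 0 := by rw [mul_pow, Real.sq_sqrt hT, Real.sq_sqrt', mul_comm]
    _ ≤ T * D' := by gcongr; exact max_le hD hD'.le

end BoundedBelow

section GFusion

variable {ι E : Type*} [NormedAddCommGroup E] [InnerProductSpace ℂ E]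
  {G : ι → Type*} [∀ j, NormedAddCommGroup (G j)] [∀ j, InnerProductSpace ℂ (G j)]

noncomputable def gFusionSum (w : ι → ℝ) (W : ι → Submodule ℂ E) [∀ j, CompleteSpace (W j)]
    (Λ : ∀ j, E →L[ℂ] G j) (f : E) : ℝ :=
  ∑' j, w j ^ 2 * ‖Λ j (proj (W j) f)‖ ^ 2

theorem gFusionSum_nonneg (w : ι → ℝ) (W : ι → Submodule ℂ E) [∀ j, CompleteSpace (W j)]
    (Λ : ∀ j, E →L[ℂ] G j) (f : E) : 0 ≤ gFusionSum w W Λ f :=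
  tsum_nonneg fun _ => by positivity

theorem inner_proj_adjoint_apply {F : Type*} [NormedAddCommGroup F] [InnerProductSpace ℂ F]
    [CompleteSpace E] [CompleteSpace F] (V : Submodule ℂ E) [CompleteSpace V] (Γ : E →L[ℂ] F)
    (g : E) (y : F) : ⟪g, proj V (adjoint Γ y)⟫_ℂ = ⟪Γ (proj V g), y⟫_ℂ := by
  change ⟪g, V.starProjection _⟫_ℂ = ⟪Γ (V.starProjection g), y⟫_ℂ
  rw [← Submodule.inner_starProjection_left_eq_right, adjoint_inner_right]

theorem HasSum.norm_inner_le_sqrt_gFusionSum_mul_sqrt [CompleteSpace E]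
    [∀ j, CompleteSpace (G j)] {W V : ι → Submodule ℂ E} [∀ j, CompleteSpace (W j)]
    [∀ j, CompleteSpace (V j)] {w v : ι → ℝ} {Λ Γ : ∀ j, E →L[ℂ] G j} {f g s : E}
    (hs : HasSum (fun j => (v j * w j) • proj (V j) (adjoint (Γ j) (Λ j (proj (W j) f)))) s)
    (hΛ : Summable fun j => w j ^ 2 * ‖Λ j (proj (W j) f)‖ ^ 2)
    (hΓ : Summable fun j => v j ^ 2 * ‖Γ j (proj (V j) g)‖ ^ 2) :
    ‖⟪g, s⟫_ℂ‖ ≤ √(gFusionSum v V Γ g) * √(gFusionSum w W Λ f) := by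
  have habs_sq (c x : ℝ) : (|c| * x) ^ 2 = c ^ 2 * x ^ 2 := by rw [mul_pow, sq_abs]
  have hterm (j : ι) : ‖⟪g, (v j * w j) • proj (V j) (adjoint (Γ j) (Λ j (proj (W j) f)))⟫_ℂ‖ ≤
      |v j| * ‖Γ j (proj (V j) g)‖ * (|w j| * ‖Λ j (proj (W j) f)‖) := by
    rw [inner_smul_right_eq_smul, norm_smul, inner_proj_adjoint_apply, Real.norm_eq_abs,
      abs_mul]
    calc |v j| * |w j| * ‖⟪Γ j (proj (V j) g), Λ j (proj (W j) f)⟫_ℂ‖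
        ≤ |v j| * |w j| * (‖Γ j (proj (V j) g)‖ * ‖Λ j (proj (W j) f)‖) := by
          gcongr; exact norm_inner_le_norm _ _
      _ = _ := by ring
  simpa only [habs_sq, innerSL_apply_apply, gFusionSum] using
    (hs.mapL (innerSL ℂ g)).norm_le_sqrt_mul_sqrt hterm (fun j => by positivity)
      (fun j => by positivity) (by simpa only [habs_sq] using hΓ)
      (by simpa only [habs_sq] using hΛ)

end GFusion

theorem stmt13_general
    {ι E : Type*} [NormedAddCommGroup E] [InnerProductSpace ℂ E] [CompleteSpace E]
    {G : ι → Type*} [∀ j, NormedAddCommGroup (G j)] [∀ j, InnerProductSpace ℂ (G j)]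
    [∀ j, CompleteSpace (G j)]
    (W V' : ι → Submodule ℂ E) [∀ j, CompleteSpace (W j)] [∀ j, CompleteSpace (V' j)]
    (w v : ι → ℝ)
    (Λ Γ : ∀ j, E →L[ℂ] G j)
    (D₁ D₂ : ℝ)
    (hΛ : ∀ f : E, Summable (fun j => (w j) ^ 2 * ‖Λ j (proj (W j) f)‖ ^ 2) ∧
      ∑' j, (w j) ^ 2 * ‖Λ j (proj (W j) f)‖ ^ 2 ≤ D₁ * ‖f‖ ^ 2)
    (hΓ : ∀ f : E, Summable (fun j => (v j) ^ 2 * ‖Γ j (proj (V' j) f)‖ ^ 2) ∧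
      ∑' j, (v j) ^ 2 * ‖Γ j (proj (V' j) f)‖ ^ 2 ≤ D₂ * ‖f‖ ^ 2)
    (S : E →L[ℂ] E)
    (hS : ∀ f : E, HasSum
      (fun j => (v j * w j) • proj (V' j)
        (ContinuousLinearMap.adjoint (Γ j) (Λ j (proj (W j) f)))) (S f))
    (lam : ℝ) (h0 : 0 ≤ lam) (h1 : lam < 1)
    (hper : ∀ f : E, ‖f - S f‖ ≤ lam * ‖f‖) :
    (∃ A > (0 : ℝ), ∀ f : E,
        A * ‖f‖ ^ 2 ≤ ∑' j, (w j) ^ 2 * ‖Λ j (proj (W j) f)‖ ^ 2 ∧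
        ∑' j, (w j) ^ 2 * ‖Λ j (proj (W j) f)‖ ^ 2 ≤ D₁ * ‖f‖ ^ 2) ∧
    ∀ f : E,
      (1 - lam) ^ 2 / D₁ * ‖f‖ ^ 2 ≤ ∑' j, (v j) ^ 2 * ‖Γ j (proj (V' j) f)‖ ^ 2 ∧
      ∑' j, (v j) ^ 2 * ‖Γ j (proj (V' j) f)‖ ^ 2 ≤ D₂ * ‖f‖ ^ 2 := by
  have hinner (f g : E) : ‖⟪g, S f⟫_ℂ‖ ≤ √(gFusionSum v V' Γ g) * √(gFusionSum w W Λ f) :=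
    (hS f).norm_inner_le_sqrt_gFusionSum_mul_sqrt (hΛ f).1 (hΓ g).1
  have hΛ_lower (f : E) : (1 - lam) * ‖f‖ ≤ √D₂ * √(gFusionSum w W Λ f) :=
    (one_sub_mul_norm_le_norm_of_norm_sub_le (hper f)).trans
      (norm_apply_le_sqrt_mul_sqrt hinner (fun g => (hΓ g).2) f)
  have hΓ_lower (g : E) : (1 - lam) * ‖g‖ ≤ √D₁ * √(gFusionSum v V' Γ g) :=
    (one_sub_mul_norm_le_norm_of_norm_sub_le (norm_sub_adjoint_apply_le h0 hper g)).trans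
      (norm_adjoint_apply_le_sqrt_mul_sqrt hinner (fun f => (hΛ f).2) g)
  -- `max D₂ 1` rather than `D₂`: nothing forces `D₂ > 0` when `E` is trivial.
  refine ⟨⟨(1 - lam) ^ 2 / max D₂ 1, div_pos (by nlinarith) (lt_max_of_lt_right one_pos),
    fun f => ⟨?_, (hΛ f).2⟩⟩, fun g => ⟨?_, (hΓ g).2⟩⟩
  · simpa only [mul_pow, mul_div_right_comm, gFusionSum] using sq_div_le_of_le_sqrt_mul_sqrt
      (by positivity) (gFusionSum_nonneg w W Λ f) (le_max_left D₂ 1) (hΛ_lower f)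
  · simpa only [mul_pow, mul_div_right_comm, gFusionSum] using sq_div_le_of_le_sqrt_mul_sqrt
      (by positivity) (gFusionSum_nonneg v V' Γ g) le_rfl (hΓ_lower g)

/-- if ‖f − S_{ΓΛ} f‖ ≤ λ‖f‖ with λ ∈ [0,1), then both Λ and Γ are g-fusion
frames; in particular Γ has bounds (1−λ)²/D₁ and D₂. -/
theorem stmt13
    {ι E : Type*} [NormedAddCommGroup E] [InnerProductSpace ℂ E] [CompleteSpace E]
    {G : ι → Type*} [∀ j, NormedAddCommGroup (G j)] [∀ j, InnerProductSpace ℂ (G j)]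
    [∀ j, CompleteSpace (G j)]
    (W V' : ι → Submodule ℂ E) [∀ j, CompleteSpace (W j)] [∀ j, CompleteSpace (V' j)]
    (w v : ι → ℝ) (hw : ∀ j, 0 < w j) (hv : ∀ j, 0 < v j)
    (Λ Γ : ∀ j, E →L[ℂ] G j)
    (D₁ D₂ : ℝ)
    (hΛ : ∀ f : E, Summable (fun j => (w j) ^ 2 * ‖Λ j (proj (W j) f)‖ ^ 2) ∧
      ∑' j, (w j) ^ 2 * ‖Λ j (proj (W j) f)‖ ^ 2 ≤ D₁ * ‖f‖ ^ 2)
    (hΓ : ∀ f : E, Summable (fun j => (v j) ^ 2 * ‖Γ j (proj (V' j) f)‖ ^ 2) ∧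
      ∑' j, (v j) ^ 2 * ‖Γ j (proj (V' j) f)‖ ^ 2 ≤ D₂ * ‖f‖ ^ 2)
    (S : E →L[ℂ] E)
    (hS : ∀ f : E, HasSum
      (fun j => (v j * w j) • proj (V' j)
        (ContinuousLinearMap.adjoint (Γ j) (Λ j (proj (W j) f)))) (S f))
    (lam : ℝ) (h0 : 0 ≤ lam) (h1 : lam < 1)
    (hper : ∀ f : E, ‖f - S f‖ ≤ lam * ‖f‖) :
    (∃ A > (0 : ℝ), ∀ f : E,
        A * ‖f‖ ^ 2 ≤ ∑' j, (w j) ^ 2 * ‖Λ j (proj (W j) f)‖ ^ 2 ∧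
        ∑' j, (w j) ^ 2 * ‖Λ j (proj (W j) f)‖ ^ 2 ≤ D₁ * ‖f‖ ^ 2) ∧
    ∀ f : E,
      (1 - lam) ^ 2 / D₁ * ‖f‖ ^ 2 ≤ ∑' j, (v j) ^ 2 * ‖Γ j (proj (V' j) f)‖ ^ 2 ∧
      ∑' j, (v j) ^ 2 * ‖Γ j (proj (V' j) f)‖ ^ 2 ≤ D₂ * ‖f‖ ^ 2 :=
  stmt13_general W V' w v Λ Γ D₁ D₂ hΛ hΓ S hS lam h0 h1 hper
end
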